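/- Oscillatory projection theorem (Theorem 3.9, Hilbert-space form). Assume Hypotheses (SL) and (SLO). Then for every (k, f) ∈ ℝ^D × ℝ and every n ∈ ℤ^D with n ≠ 0, the set { v ∈ ℝ \ {0} : there exists ψ ∈ H, ψ ≠ 0, with ⟨Ω, ψ⟩ = 0 and U(n, ‖n‖₁/v)ψ = e^{i(k·n − f‖n‖₁/v)}·ψ } is countable, and in particular has Lebesgue measure zero (here k·n = Σᵢ kᵢnᵢ). -/

import Mathlib

/-!
Fix `n ≠ 0` and write `t_v = ‖n‖₁ / v`. For `v ≠ w`, let `ψ_v`, `ψ_w` be eigenvectors of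
`U(n, t_v)`, `U(n, t_w)` orthogonal to `Ω`. The orthogonal projection `φ` of `ψ_w` onto the
eigenspace of `U(n, t_v)` containing `ψ_v` is an eigenvector of both `U(n, t_v)` and `U(n, t_w)`,
since the two operators commute; hence `φ` is an eigenvector of `U(a • (n, t_v) - b • (n, t_w))`
for all integers `a, b`. As `t_v ≠ t_w`, some `a ≠ b` make this element space-like, and then (SL)
and (SLO) force `φ ∈ ℂ Ω`, so `⟪ψ_v, ψ_w⟫ = ⟪ψ_v, φ⟫ = 0`. The eigenvectors for distinct speeds
are thus pairwise orthogonal, and a separable Hilbert space has no uncountable orthogonal family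
of nonzero vectors.
-/

open Filter MeasureTheory Topology

noncomputable def l1 {D : ℕ} (n : Fin D → ℤ) : ℝ := ∑ i, |(n i : ℝ)|

variable {D : ℕ} {H : Type*} [NormedAddCommGroup H] [InnerProductSpace ℂ H]
  [CompleteSpace H] [TopologicalSpace.SeparableSpace H]

open scoped InnerProductSpace

lemma l1_zsmul (c : ℤ) (n : Fin D → ℤ) : l1 (c • n) = |(c : ℝ)| * l1 n := by
  simp only [l1, Finset.mul_sum, Pi.smul_apply, smul_eq_mul, Int.cast_mul, abs_mul]

lemma l1_pos {n : Fin D → ℤ} (hn : n ≠ 0) : 0 < l1 n := by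
  obtain ⟨i, hi⟩ := Function.ne_iff.mp hn
  exact Finset.sum_pos' (fun j _ => abs_nonneg _) ⟨i, Finset.mem_univ i, by simpa using hi⟩

lemma exists_int_spaceLike_combination {c L t t' : ℝ} (hc : 0 ≤ c) (hL : 0 < L) (ht : t ≠ 0)
    (htt' : t ≠ t') : ∃ a b : ℤ, a ≠ b ∧ c * |a * t - b * t'| < |(a : ℝ) - b| * L := by
  -- the condition is homogeneous in `(a, b)` and holds strictly at `(t', t)`; take `a / b` a
  -- rational approximation of `t' / t`
  set s : Set ℝ := {r | c * |r * t - t'| < |r - 1| * L}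
  have hs : IsOpen s := isOpen_lt (by fun_prop) (by fun_prop)
  have hts : t' / t ∈ s := by
    have : t' / t - 1 ≠ 0 := sub_ne_zero.mpr fun h => htt' ((div_eq_one_iff_eq ht).mp h).symm
    simp only [s, Set.mem_ofPred_eq, div_mul_cancel₀ t' ht, sub_self, abs_zero, mul_zero]
    positivity
  obtain ⟨q, hq⟩ := Rat.denseRange_cast.exists_mem_open hs ⟨_, hts⟩
  have hden : (0 : ℝ) < q.den := by exact_mod_cast q.den_pos
  have hq' : (q : ℝ) = q.num / q.den := Rat.cast_def q
  have hcomb : (q.num : ℝ) * t - q.den * t' = q.den * (q * t - t') := by rw [hq']; field_simp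
  have hdiff : (q.num : ℝ) - q.den = q.den * (q - 1) := by rw [hq']; field_simp
  have hlt : c * |q.num * t - q.den * t'| < |(q.num : ℝ) - q.den| * L := by
    rw [hcomb, hdiff, abs_mul, abs_mul, abs_of_pos hden]
    calc c * (q.den * |q * t - t'|) = q.den * (c * |q * t - t'|) := by ring
      _ < q.den * (|(q : ℝ) - 1| * L) := mul_lt_mul_of_pos_left hq hden
      _ = q.den * |(q : ℝ) - 1| * L := by ring
  refine ⟨q.num, q.den, fun h => ?_, by exact_mod_cast hlt⟩
  rw [h, Int.cast_natCast, sub_self, abs_zero, zero_mul] at hlt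
  exact hlt.not_ge (by positivity)

section Projection

variable {𝕜 E : Type*} [RCLike 𝕜] [NormedAddCommGroup E] [InnerProductSpace 𝕜 E]

lemma Submodule.starProjection_apply_comm_of_mapsTo (K : Submodule 𝕜 E) [K.HasOrthogonalProjection]
    (T : E ≃ₗᵢ[𝕜] E) (hT : ∀ x ∈ K, T x ∈ K) (hT' : ∀ x ∈ K, T.symm x ∈ K) (x : E) :
    K.starProjection (T x) = T (K.starProjection x) := by
  refine K.eq_starProjection_of_mem_of_inner_eq_zero (hT _ (K.starProjection_apply_mem x))
    fun w hw => ?_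
  rw [← map_sub, T.inner_map_eq_flip, K.starProjection_inner_eq_zero _ _ (hT' w hw)]

lemma isClosed_eigenspace (A : E ≃ₗᵢ[𝕜] E) (μ : 𝕜) :
    IsClosed (Module.End.eigenspace (A : E →ₗ[𝕜] E) μ : Set E) := by
  convert isClosed_eq A.continuous (continuous_const_smul μ) using 1
  ext x
  exact Module.End.mem_eigenspace_iff

lemma mem_eigenspace_of_commute {A T : E ≃ₗᵢ[𝕜] E} (hAT : ∀ x, A (T x) = T (A x)) {μ : 𝕜}
    {x : E} (hx : x ∈ Module.End.eigenspace (A : E →ₗ[𝕜] E) μ) :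
    T x ∈ Module.End.eigenspace (A : E →ₗ[𝕜] E) μ := by
  rw [Module.End.mem_eigenspace_iff] at hx ⊢
  change A x = μ • x at hx
  change A (T x) = μ • T x
  rw [hAT, hx, map_smul]

instance [CompleteSpace E] (A : E ≃ₗᵢ[𝕜] E) (μ : 𝕜) :
    (Module.End.eigenspace (A : E →ₗ[𝕜] E) μ).HasOrthogonalProjection :=
  have := (isClosed_eigenspace A μ).completeSpace_coe
  inferInstance

lemma starProjection_eigenspace_apply_comm_of_commute [CompleteSpace E] {A T : E ≃ₗᵢ[𝕜] E}
    (hAT : ∀ x, A (T x) = T (A x)) (μ : 𝕜) (x : E) :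
    (Module.End.eigenspace (A : E →ₗ[𝕜] E) μ).starProjection (T x) =
      T ((Module.End.eigenspace (A : E →ₗ[𝕜] E) μ).starProjection x) := by
  have hAT' : ∀ x, A (T.symm x) = T.symm (A x) := fun x => by
    rw [T.eq_symm_apply, ← hAT, T.apply_symm_apply]
  exact Submodule.starProjection_apply_comm_of_mapsTo _ T (fun _ => mem_eigenspace_of_commute hAT)
    (fun _ => mem_eigenspace_of_commute hAT') x

lemma countable_of_pairwise_inner_eq_zero [TopologicalSpace.SeparableSpace E] {ι : Type*}
    {S : Set ι} {e : ι → E} (hne : ∀ i ∈ S, e i ≠ 0)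
    (horth : S.Pairwise fun i j => ⟪e i, e j⟫_𝕜 = 0) : S.Countable := by
  set u : ι → E := fun i => (‖e i‖ : 𝕜)⁻¹ • e i
  have hu : ∀ i ∈ S, ‖u i‖ = 1 := fun i hi => norm_smul_inv_norm (hne i hi)
  have hsep : S.Pairwise fun i j => 1 ≤ dist (u i) (u j) := by
    intro i hi j hj hij
    have hsq : ‖u i - u j‖ ^ 2 = 2 := by
      rw [@norm_sub_sq 𝕜, hu i hi, hu j hj]
      simp only [u, inner_smul_left, inner_smul_right, horth hi hj hij, mul_zero, map_zero]
      norm_num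
    rw [dist_eq_norm]
    nlinarith [norm_nonneg (u i - u j)]
  refine Set.PairwiseDisjoint.countable_of_isOpen (s := fun i => Metric.ball (u i) (1 / 2))
    (fun i hi j hj hij => Metric.ball_disjoint_ball ?_) (fun _ _ => Metric.isOpen_ball)
    (fun _ _ => Metric.nonempty_ball.mpr one_half_pos)
  linarith [hsep hi hj hij]

end Projection

section Representation

variable {E : Type*} [NormedAddCommGroup E] [InnerProductSpace ℂ E]
  {G : Type*} [AddCommGroup G] {U : G → E ≃ₗᵢ[ℂ] E}

lemma apply_comm_of_map_add (hU : ∀ p q, U (p + q) = (U q).trans (U p)) (p q : G) (x : E) :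
    U p (U q x) = U q (U p x) := by
  rw [← LinearIsometryEquiv.trans_apply, ← hU, add_comm, hU, LinearIsometryEquiv.trans_apply]

def lineStabilizer (hU0 : U 0 = LinearIsometryEquiv.refl ℂ E)
    (hU : ∀ p q, U (p + q) = (U q).trans (U p)) (φ : E) : AddSubgroup G where
  carrier := {p | U p φ ∈ ℂ ∙ φ}
  zero_mem' := by simp [hU0, Submodule.mem_span_singleton_self]
  add_mem' := by
    intro p q hp hq
    obtain ⟨c, hc⟩ := Submodule.mem_span_singleton.mp hq
    simp only [Set.mem_ofPred_eq, hU, LinearIsometryEquiv.trans_apply, ← hc, map_smul]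
    exact Submodule.smul_mem _ c hp
  neg_mem' := by
    intro p hp
    obtain ⟨c, hc⟩ := Submodule.mem_span_singleton.mp hp
    have hφ : c • U (-p) φ = φ := by
      rw [← map_smul, hc, ← LinearIsometryEquiv.trans_apply, ← hU, neg_add_cancel, hU0]
      rfl
    rcases eq_or_ne c 0 with rfl | hc0
    · rw [zero_smul] at hφ
      simp [← hφ]
    · exact Submodule.mem_span_singleton.mpr ⟨c⁻¹, ((eq_inv_smul_iff₀ hc0).mpr hφ).symm⟩

end Representation

section SpaceLike

variable {E : Type*} [NormedAddCommGroup E] [InnerProductSpace ℂ E]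

def HypothesisSL (U : (Fin D → ℤ) × ℝ → E ≃ₗᵢ[ℂ] E) (Ω : E) (vc : ℝ) : Prop :=
  ∀ (m : Fin D → ℤ) (t : ℝ), m ≠ 0 → vc * |t| < l1 m →
    ∀ ψ : E, U (m, t) ψ = ψ → ∃ c : ℂ, ψ = c • Ω

def HypothesisSLO (U : (Fin D → ℤ) × ℝ → E ≃ₗᵢ[ℂ] E) (vc : ℝ) : Prop :=
  ∀ (m : Fin D → ℤ) (t : ℝ), m ≠ 0 → vc * |t| < l1 m →
    ∀ θ : ℝ, (∀ j : ℤ, θ ≠ 2 * Real.pi * j) →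
    ∀ ψ : E, U (m, t) ψ = Complex.exp (Complex.I * (θ : ℂ)) • ψ → ψ = 0

variable {U : (Fin D → ℤ) × ℝ → E ≃ₗᵢ[ℂ] E} {Ω : E} {vc : ℝ}

lemma mem_span_singleton_of_spaceLike (hSL : HypothesisSL U Ω vc) (hSLO : HypothesisSLO U vc)
    {m : Fin D → ℤ} {t : ℝ} (hm : m ≠ 0) (ht : vc * |t| < l1 m) {φ : E}
    (hφ : U (m, t) φ ∈ ℂ ∙ φ) : φ ∈ ℂ ∙ Ω := by
  obtain ⟨c, hc⟩ := Submodule.mem_span_singleton.mp hφ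
  rcases eq_or_ne φ 0 with rfl | hφ0
  · exact zero_mem _
  have hc1 : ‖c‖ = 1 := by
    have := congrArg norm hc
    rw [norm_smul, LinearIsometryEquiv.norm_map] at this
    exact (mul_eq_right₀ (norm_ne_zero_iff.mpr hφ0)).mp this
  have hc_exp : c = Complex.exp (Complex.I * (c.arg : ℂ)) := by
    simpa [hc1, mul_comm] using (Complex.norm_mul_exp_arg_mul_I c).symm
  by_cases harg : ∃ j : ℤ, c.arg = 2 * Real.pi * j
  · obtain ⟨j, hj⟩ := harg
    have hc_one : c = 1 := by
      rw [hc_exp, hj, ← Complex.exp_int_mul_two_pi_mul_I j]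
      push_cast
      ring_nf
    obtain ⟨d, hd⟩ := hSL m t hm ht φ (by rw [← hc, hc_one, one_smul])
    exact Submodule.mem_span_singleton.mpr ⟨d, hd.symm⟩
  · rw [hSLO m t hm ht c.arg (not_exists.mp harg) φ (by rw [← hc, ← hc_exp])]
    exact zero_mem _

lemma inner_eq_zero_of_eigenvectors [CompleteSpace E] (hU0 : U 0 = LinearIsometryEquiv.refl ℂ E)
    (hU : ∀ p q, U (p + q) = (U q).trans (U p)) (hSL : HypothesisSL U Ω vc)
    (hSLO : HypothesisSLO U vc) (hvc : 0 ≤ vc) {n : Fin D → ℤ} (hn : n ≠ 0) {t t' : ℝ}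
    (ht : t ≠ 0) (htt' : t ≠ t') {μ μ' : ℂ} {ψ ψ' : E} (hψ : U (n, t) ψ = μ • ψ)
    (hψ' : U (n, t') ψ' = μ' • ψ') (hΩψ : ⟪Ω, ψ⟫_ℂ = 0) : ⟪ψ, ψ'⟫_ℂ = 0 := by
  set K := Module.End.eigenspace (U (n, t) : E →ₗ[ℂ] E) μ
  set φ := K.starProjection ψ'
  have hφt : (n, t) ∈ lineStabilizer hU0 hU φ :=
    Submodule.mem_span_singleton.mpr
      ⟨μ, (Module.End.mem_eigenspace_iff.mp (K.starProjection_apply_mem ψ')).symm⟩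
  have hφt' : (n, t') ∈ lineStabilizer hU0 hU φ := by
    change U (n, t') φ ∈ ℂ ∙ φ
    rw [← starProjection_eigenspace_apply_comm_of_commute (apply_comm_of_map_add hU _ _), hψ',
      map_smul]
    exact Submodule.smul_mem _ _ (Submodule.mem_span_singleton_self _)
  obtain ⟨a, b, hab, hsl⟩ := exists_int_spaceLike_combination hvc (l1_pos hn) ht htt'
  have hφab : ((a - b) • n, a * t - b * t') ∈ lineStabilizer hU0 hU φ := by
    convert sub_mem (zsmul_mem hφt a) (zsmul_mem hφt' b) using 1
    ext <;> simp [sub_mul]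
  have hφΩ : φ ∈ ℂ ∙ Ω := mem_span_singleton_of_spaceLike hSL hSLO
    (smul_ne_zero (sub_ne_zero.mpr hab) hn) (by rwa [l1_zsmul, Int.cast_sub]) hφab
  obtain ⟨c, hc⟩ := Submodule.mem_span_singleton.mp hφΩ
  calc ⟪ψ, ψ'⟫_ℂ = ⟪K.starProjection ψ, ψ'⟫_ℂ := by
        rw [K.starProjection_eq_self_iff.mpr (Module.End.mem_eigenspace_iff.mpr hψ)]
    _ = ⟪ψ, φ⟫_ℂ := K.inner_starProjection_left_eq_right ψ ψ'
    _ = 0 := by rw [← hc, inner_smul_right, inner_eq_zero_symm.mp hΩψ, mul_zero]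

lemma countable_of_forall_mem_eigenvector [CompleteSpace E] [TopologicalSpace.SeparableSpace E]
    (hU0 : U 0 = LinearIsometryEquiv.refl ℂ E) (hU : ∀ p q, U (p + q) = (U q).trans (U p))
    (hSL : HypothesisSL U Ω vc) (hSLO : HypothesisSLO U vc) (hvc : 0 ≤ vc) {n : Fin D → ℤ}
    (hn : n ≠ 0) (μ : ℝ → ℂ) {S : Set ℝ}
    (hS : ∀ v ∈ S, v ≠ 0 ∧ ∃ ψ : E, ψ ≠ 0 ∧ ⟪Ω, ψ⟫_ℂ = 0 ∧ U (n, l1 n / v) ψ = μ v • ψ) :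
    S.Countable := by
  choose! ψ hψ0 hΩψ hψ using fun v hv => (hS v hv).2
  refine countable_of_pairwise_inner_eq_zero (𝕜 := ℂ) hψ0 fun v hv w hw hvw => ?_
  have hL := (l1_pos hn).ne'
  exact inner_eq_zero_of_eigenvectors hU0 hU hSL hSLO hvc hn (div_ne_zero hL (hS v hv).1)
    (fun h => hvw (by simpa [div_eq_mul_inv, hL] using h)) (hψ v hv) (hψ w hw) (hΩψ v hv)

end SpaceLike

theorem oscillatory_projection_theorem_general
    (U : (Fin D → ℤ) × ℝ → H ≃ₗᵢ[ℂ] H)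
    (hU0 : U 0 = LinearIsometryEquiv.refl ℂ H)
    (hUadd : ∀ p q : (Fin D → ℤ) × ℝ, U (p + q) = (U q).trans (U p))
    (Ω : H)
    (vc : ℝ) (hvc : 0 < vc)
    (hSL : ∀ (m : Fin D → ℤ) (t : ℝ), m ≠ 0 → vc * |t| < l1 m →
      ∀ ψ : H, U (m, t) ψ = ψ → ∃ c : ℂ, ψ = c • Ω)
    (hSLO : ∀ (m : Fin D → ℤ) (t : ℝ), m ≠ 0 → vc * |t| < l1 m →
      ∀ θ : ℝ, (∀ j : ℤ, θ ≠ 2 * Real.pi * j) →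
      ∀ ψ : H, U (m, t) ψ = Complex.exp (Complex.I * (θ : ℂ)) • ψ → ψ = 0)
    (k : Fin D → ℝ) (f : ℝ) (n : Fin D → ℤ) (hn : n ≠ 0) :
    Set.Countable
      {v : ℝ | v ≠ 0 ∧ ∃ ψ : H, ψ ≠ 0 ∧ (inner ℂ Ω ψ : ℂ) = 0 ∧
        U (n, l1 n / v) ψ =
          Complex.exp (Complex.I * ((((∑ i, k i * (n i : ℝ)) - f * l1 n / v) : ℝ) : ℂ)) • ψ} ∧
    volume
      {v : ℝ | v ≠ 0 ∧ ∃ ψ : H, ψ ≠ 0 ∧ (inner ℂ Ω ψ : ℂ) = 0 ∧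
        U (n, l1 n / v) ψ =
          Complex.exp (Complex.I * ((((∑ i, k i * (n i : ℝ)) - f * l1 n / v) : ℝ) : ℂ)) • ψ} = 0 := by
  have countable_and_null (S : Set ℝ) (hS : S.Countable) : S.Countable ∧ volume S = 0 :=
    ⟨hS, hS.measure_zero _⟩
  exact countable_and_null _
    (countable_of_forall_mem_eigenvector hU0 hUadd hSL hSLO hvc.le hn _ fun v hv => hv)

/-- **Oscillatory projection theorem** (Theorem 3.9, Hilbert-space form): under Hypotheses
(SL) and (SLO), for each `(k, f)` and each `n ≠ 0` the set of speeds admitting a nonzero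
phase-twisted invariant vector orthogonal to `Ω` is countable, hence Lebesgue-null. -/
theorem oscillatory_projection_theorem
    (U : (Fin D → ℤ) × ℝ → H ≃ₗᵢ[ℂ] H)
    (hU0 : U 0 = LinearIsometryEquiv.refl ℂ H)
    (hUadd : ∀ p q : (Fin D → ℤ) × ℝ, U (p + q) = (U q).trans (U p))
    (Ω : H) (hΩ : ‖Ω‖ = 1) (hΩinv : ∀ p, U p Ω = Ω)
    (vc : ℝ) (hvc : 0 < vc)
    (hSL : ∀ (m : Fin D → ℤ) (t : ℝ), m ≠ 0 → vc * |t| < l1 m →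
      ∀ ψ : H, U (m, t) ψ = ψ → ∃ c : ℂ, ψ = c • Ω)
    (hSLO : ∀ (m : Fin D → ℤ) (t : ℝ), m ≠ 0 → vc * |t| < l1 m →
      ∀ θ : ℝ, (∀ j : ℤ, θ ≠ 2 * Real.pi * j) →
      ∀ ψ : H, U (m, t) ψ = Complex.exp (Complex.I * (θ : ℂ)) • ψ → ψ = 0)
    (k : Fin D → ℝ) (f : ℝ) (n : Fin D → ℤ) (hn : n ≠ 0) :
    Set.Countable
      {v : ℝ | v ≠ 0 ∧ ∃ ψ : H, ψ ≠ 0 ∧ (inner ℂ Ω ψ : ℂ) = 0 ∧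
        U (n, l1 n / v) ψ =
          Complex.exp (Complex.I * ((((∑ i, k i * (n i : ℝ)) - f * l1 n / v) : ℝ) : ℂ)) • ψ} ∧
    volume
      {v : ℝ | v ≠ 0 ∧ ∃ ψ : H, ψ ≠ 0 ∧ (inner ℂ Ω ψ : ℂ) = 0 ∧
        U (n, l1 n / v) ψ =
          Complex.exp (Complex.I * ((((∑ i, k i * (n i : ℝ)) - f * l1 n / v) : ℝ) : ℂ)) • ψ} = 0 :=
  oscillatory_projection_theorem_general U hU0 hUadd Ω vc hvc hSL hSLO k f n hn
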